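/- arXiv:math/0703870 — 4 statements merged into one kernel-verified Lean document; each statement's English description precedes it below -/
import Mathlib

section
/- Let l ∈ ℕ, let a, b ∈ ℂ, let Ω ⊆ ℂ ∖ (−∞, 0] be open, let v : ℂ → ℂ be holomorphic on Ω, and set u(t) = a·t^l·log t + t^l·(b + v(t)) on Ω. Then for every t ∈ Ω and every j ∈ ℕ: (i) if j ≤ l, then t^(j−l) · u^{(j)}(t) = a·( [l; j]·log t + b_{j,l} ) + ( A_l ∘ A_{l−1} ∘ ⋯ ∘ A_{l−j+1} )(s ↦ b + v(s)) (t); (ii) if j ≥ l + 1, then t^(j−l) · u^{(j)}(t) = β_{j,l}·a + ( A_l ∘ A_{l−1} ∘ ⋯ ∘ A_{l−j+1} )(v)(t). Here t^(j−l) is an integer (possibly negative) power of t and u^{(j)} is the j-th iterated complex derivative. -/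
/-- The operator `A_c = t∂_t + c`, sending `g` to `t ↦ t·g'(t) + c·g(t)`. -/
noncomputable def eulerOp (c : ℤ) (g : ℂ → ℂ) : ℂ → ℂ :=
  fun t => t * deriv g t + (c : ℂ) * g t

/-- The composed operator `[t∂_t + l; j] = A_l ∘ A_{l-1} ∘ ⋯ ∘ A_{l-j+1}`
(`j` factors; the identity for `j = 0`). -/
noncomputable def eulerFall (l : ℤ) : ℕ → (ℂ → ℂ) → ℂ → ℂ
  | 0 => fun g => g
  | i + 1 => fun g => eulerFall l i (eulerOp (l - i) g)

/-- The sequence `b_{j,l}`: `b_{0,l} = 0`, `b_{j+1,l} = [l; j] + (l - j)·b_{j,l}`. -/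
noncomputable def bSeq (l : ℕ) : ℕ → ℂ
  | 0 => 0
  | j + 1 => (Nat.descFactorial l j : ℂ) + ((l : ℂ) - (j : ℂ)) * bSeq l j

lemma eqOn_deriv {Ω : Set ℂ} (hΩ : IsOpen Ω) {g h : ℂ → ℂ} (hgh : Set.EqOn g h Ω)
    {t : ℂ} (ht : t ∈ Ω) : deriv g t = deriv h t :=
  Filter.EventuallyEq.deriv_eq (Filter.eventuallyEq_of_mem (hΩ.mem_nhds ht) hgh)

lemma eulerOp_congr {Ω : Set ℂ} (hΩ : IsOpen Ω) {g h : ℂ → ℂ} (hgh : Set.EqOn g h Ω)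
    (c : ℤ) : Set.EqOn (eulerOp c g) (eulerOp c h) Ω := fun t ht => by
  simp only [eulerOp, eqOn_deriv hΩ hgh ht, hgh ht]

lemma eulerFall_congr {Ω : Set ℂ} (hΩ : IsOpen Ω) (l : ℤ) (j : ℕ) :
    ∀ {g h : ℂ → ℂ}, Set.EqOn g h Ω → Set.EqOn (eulerFall l j g) (eulerFall l j h) Ω := by
  induction j with
  | zero => intro g h hgh; exact hgh
  | succ j ih => intro g h hgh; exact ih (eulerOp_congr hΩ hgh _)

lemma eulerOp_analytic {Ω : Set ℂ} {g : ℂ → ℂ} (hg : AnalyticOnNhd ℂ g Ω) (c : ℤ) :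
    AnalyticOnNhd ℂ (eulerOp c g) Ω :=
  (analyticOnNhd_id.mul hg.deriv).add (analyticOnNhd_const.mul hg)

lemma eulerFall_analytic {Ω : Set ℂ} (l : ℤ) (j : ℕ) :
    ∀ {g : ℂ → ℂ}, AnalyticOnNhd ℂ g Ω → AnalyticOnNhd ℂ (eulerFall l j g) Ω := by
  induction j with
  | zero => exact fun hg => hg
  | succ j ih => exact fun hg => ih (eulerOp_analytic hg _)

lemma deriv_eulerOp {Ω : Set ℂ} (hΩ : IsOpen Ω) {g : ℂ → ℂ} (hg : AnalyticOnNhd ℂ g Ω)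
    (c : ℤ) {t : ℂ} (ht : t ∈ Ω) :
    deriv (eulerOp c g) t = t * deriv (deriv g) t + ((c : ℂ) + 1) * deriv g t := by
  have h1 : DifferentiableAt ℂ g t := (hg t ht).differentiableAt
  have h2 : DifferentiableAt ℂ (deriv g) t := (hg.deriv t ht).differentiableAt
  have h : HasDerivAt (eulerOp c g)
      (t * deriv (deriv g) t + ((c : ℂ) + 1) * deriv g t) t := by
    have := ((hasDerivAt_id t).mul h2.hasDerivAt).add (h1.hasDerivAt.const_mul (c : ℂ))
    refine this.congr_deriv ?_
    simp only [id_eq]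
    ring
  exact h.deriv

lemma eulerOp_comm {Ω : Set ℂ} (hΩ : IsOpen Ω) {g : ℂ → ℂ} (hg : AnalyticOnNhd ℂ g Ω)
    (c d : ℤ) : Set.EqOn (eulerOp c (eulerOp d g)) (eulerOp d (eulerOp c g)) Ω := by
  intro t ht
  show t * deriv (eulerOp d g) t + (c : ℂ) * eulerOp d g t
      = t * deriv (eulerOp c g) t + (d : ℂ) * eulerOp c g t
  rw [deriv_eulerOp hΩ hg d ht, deriv_eulerOp hΩ hg c ht]
  simp only [eulerOp]
  ring

lemma eulerFall_eulerOp {Ω : Set ℂ} (hΩ : IsOpen Ω) (l : ℤ) (j : ℕ) :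
    ∀ {g : ℂ → ℂ}, AnalyticOnNhd ℂ g Ω → ∀ c : ℤ,
      Set.EqOn (eulerFall l j (eulerOp c g)) (eulerOp c (eulerFall l j g)) Ω := by
  induction j with
  | zero => intro g _ c t _; rfl
  | succ j ih =>
    intro g hg c t ht
    show eulerFall l j (eulerOp (l - j) (eulerOp c g)) t
        = eulerOp c (eulerFall l j (eulerOp (l - j) g)) t
    have e1 := eulerFall_congr hΩ l j (eulerOp_comm hΩ hg (l - j) c) ht
    have e2 := ih (eulerOp_analytic hg (l - j)) c ht
    exact e1.trans e2

lemma eulerFall_succ_eq {Ω : Set ℂ} (hΩ : IsOpen Ω) (l : ℤ) (j : ℕ) {g : ℂ → ℂ}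
    (hg : AnalyticOnNhd ℂ g Ω) :
    Set.EqOn (eulerFall l (j + 1) g)
      (fun t => t * deriv (eulerFall l j g) t + ((l : ℂ) - (j : ℂ)) * eulerFall l j g t) Ω := by
  intro t ht
  have h := eulerFall_eulerOp hΩ l j hg (l - j) ht
  show eulerFall l j (eulerOp (l - j) g) t = _
  rw [h]
  show t * deriv (eulerFall l j g) t + (((l - j : ℤ)) : ℂ) * eulerFall l j g t = _
  push_cast
  ring

lemma eulerFall_const_add {Ω : Set ℂ} (hΩ : IsOpen Ω) (l : ℕ) :
    ∀ (j : ℕ), j ≤ l → ∀ (K : ℂ) {v : ℂ → ℂ}, AnalyticOnNhd ℂ v Ω →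
      Set.EqOn (eulerFall (l : ℤ) j (fun s => K + v s))
        (fun t => (Nat.descFactorial l j : ℂ) * K + eulerFall (l : ℤ) j v t) Ω := by
  intro j
  induction j with
  | zero => intro _ K v hv t ht; simp [eulerFall]
  | succ j ih =>
    intro hj K v hv t ht
    have hjl : j < l := hj
    have h1 : eulerOp ((l : ℤ) - j) (fun s => K + v s)
        = fun t => ((l : ℂ) - (j : ℂ)) * K + eulerOp ((l : ℤ) - j) v t := by
      funext s
      simp only [eulerOp, deriv_const_add]
      push_cast
      ring
    show eulerFall (l : ℤ) j (eulerOp ((l : ℤ) - j) fun s => K + v s) t = _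
    rw [h1]
    have h2 := ih hjl.le (((l : ℂ) - (j : ℂ)) * K) (eulerOp_analytic hv ((l : ℤ) - j)) ht
    rw [h2]
    show (Nat.descFactorial l j : ℂ) * (((l : ℂ) - (j : ℂ)) * K)
        + eulerFall (l : ℤ) j (eulerOp ((l : ℤ) - j) v) t
      = (Nat.descFactorial l (j + 1) : ℂ) * K + eulerFall (l : ℤ) (j + 1) v t
    rw [Nat.descFactorial_succ, Nat.cast_mul, Nat.cast_sub hjl.le]
    show _ = _ + eulerFall (l : ℤ) j (eulerOp ((l : ℤ) - j) v) t
    ring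

/-- Let `u(t) = a·t^l·log t + t^l·(b + v(t))` with `v` holomorphic on an
open subset `Ω` of the slit plane. Then for `t ∈ Ω` and any `j`:
(i) if `j ≤ l` then `t^(j-l)·u^{(j)}(t) = a·([l;j]·log t + b_{j,l}) + [t∂_t+l;j](b + v)(t)`;
(ii) if `j ≥ l+1` then `t^(j-l)·u^{(j)}(t) = β_{j,l}·a + [t∂_t+l;j] v (t)`,
with `β_{j,l} = (-1)^(j-l-1)·l!·(j-l-1)!`. -/
theorem stmt_5 (l : ℕ) (a b : ℂ) (Ω : Set ℂ) (hΩ : IsOpen Ω)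
    (hΩslit : Ω ⊆ Complex.slitPlane)
    (v : ℂ → ℂ) (hv : DifferentiableOn ℂ v Ω) :
    ∀ t ∈ Ω, ∀ j : ℕ,
      (j ≤ l →
        t ^ ((j : ℤ) - (l : ℤ)) *
            iteratedDeriv j
              (fun z : ℂ => a * z ^ l * Complex.log z + z ^ l * (b + v z)) t =
          a * ((Nat.descFactorial l j : ℂ) * Complex.log t + bSeq l j) +
            eulerFall (l : ℤ) j (fun s => b + v s) t) ∧
      (l + 1 ≤ j →
        t ^ ((j : ℤ) - (l : ℤ)) *
            iteratedDeriv j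
              (fun z : ℂ => a * z ^ l * Complex.log z + z ^ l * (b + v z)) t =
          (-1 : ℂ) ^ (j - l - 1) * (Nat.factorial l : ℂ) * (Nat.factorial (j - l - 1) : ℂ)
              * a +
            eulerFall (l : ℤ) j v t) := by
  have hva : AnalyticOnNhd ℂ v Ω := hv.analyticOnNhd hΩ
  have hga : AnalyticOnNhd ℂ (fun s => b + v s) Ω := analyticOnNhd_const.add hva
  set u : ℂ → ℂ := fun z : ℂ => a * z ^ l * Complex.log z + z ^ l * (b + v z) with hu
  have key : ∀ j : ℕ, ∀ t ∈ Ω,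
      (j ≤ l → iteratedDeriv j u t =
          a * ((Nat.descFactorial l j : ℂ) * Complex.log t + bSeq l j) * t ^ ((l : ℤ) - (j : ℤ))
            + t ^ ((l : ℤ) - (j : ℤ)) * eulerFall (l : ℤ) j (fun s => b + v s) t) ∧
      (l + 1 ≤ j → iteratedDeriv j u t =
          (-1 : ℂ) ^ (j - l - 1) * (Nat.factorial l : ℂ) * (Nat.factorial (j - l - 1) : ℂ) * a
              * t ^ ((l : ℤ) - (j : ℤ))
            + t ^ ((l : ℤ) - (j : ℤ)) * eulerFall (l : ℤ) j v t) := by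
    intro j
    induction j with
    | zero =>
      intro t ht
      refine ⟨fun _ => ?_, fun h => absurd h (by omega)⟩
      simp only [iteratedDeriv_zero, hu, Nat.cast_zero, sub_zero, Nat.descFactorial_zero,
        Nat.cast_one, bSeq, eulerFall, zpow_natCast]
      ring
    | succ j ih =>
      intro t ht
      have hts : t ∈ Complex.slitPlane := hΩslit ht
      have ht0 : t ≠ 0 := Complex.slitPlane_ne_zero hts
      constructor
      · -- j + 1 ≤ l
        intro hj
        have hjl : j ≤ l := Nat.le_of_succ_le hj
        have hjl' : j < l := hj
        have hFa : AnalyticOnNhd ℂ (eulerFall (l : ℤ) j (fun s => b + v s)) Ω :=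
          eulerFall_analytic _ j hga
        have hEq : Set.EqOn (iteratedDeriv j u)
            (fun s => a * ((Nat.descFactorial l j : ℂ) * Complex.log s + bSeq l j)
                * s ^ ((l : ℤ) - (j : ℤ))
              + s ^ ((l : ℤ) - (j : ℤ)) * eulerFall (l : ℤ) j (fun s' => b + v s') s) Ω :=
          fun s hs => (ih s hs).1 hjl
        rw [iteratedDeriv_succ,
          Filter.EventuallyEq.deriv_eq (Filter.eventuallyEq_of_mem (hΩ.mem_nhds ht) hEq)]
        have hlog := Complex.hasDerivAt_log hts
        have hpow := hasDerivAt_zpow ((l : ℤ) - (j : ℤ)) t (Or.inl ht0)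
        have hFd := ((hFa t ht).differentiableAt).hasDerivAt
        have hD : HasDerivAt
            (fun s : ℂ => a * ((Nat.descFactorial l j : ℂ) * Complex.log s + bSeq l j)
                * s ^ ((l : ℤ) - (j : ℤ))
              + s ^ ((l : ℤ) - (j : ℤ)) * eulerFall (l : ℤ) j (fun s' => b + v s') s)
            (a * ((Nat.descFactorial l j : ℂ) * t⁻¹) * t ^ ((l : ℤ) - (j : ℤ))
              + a * ((Nat.descFactorial l j : ℂ) * Complex.log t + bSeq l j)
                  * ((((l : ℤ) - (j : ℤ) : ℤ) : ℂ) * t ^ ((l : ℤ) - (j : ℤ) - 1))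
              + (((((l : ℤ) - (j : ℤ) : ℤ) : ℂ) * t ^ ((l : ℤ) - (j : ℤ) - 1))
                    * eulerFall (l : ℤ) j (fun s' => b + v s') t
                + t ^ ((l : ℤ) - (j : ℤ))
                    * deriv (eulerFall (l : ℤ) j (fun s' => b + v s')) t)) t :=
          ((((hlog.const_mul _).add_const _).const_mul a).mul hpow).add (hpow.mul hFd)
        rw [hD.deriv]
        rw [eulerFall_succ_eq hΩ (l : ℤ) j hga ht]
        rw [show ((l : ℤ) - ((j + 1 : ℕ) : ℤ)) = (l : ℤ) - (j : ℤ) - 1 by push_cast; ring]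
        rw [show t ^ ((l : ℤ) - (j : ℤ)) = t ^ ((l : ℤ) - (j : ℤ) - 1) * t by
          rw [← zpow_add_one₀ ht0, sub_add_cancel]]
        simp only [bSeq, Nat.descFactorial_succ, Nat.cast_mul, Nat.cast_sub hjl]
        push_cast
        field_simp
        ring
      · intro hj
        rcases eq_or_lt_of_le (Nat.le_of_succ_le_succ hj) with heq | hlt
        · -- transition j = l
          subst heq
          have hGa : AnalyticOnNhd ℂ (eulerFall (l : ℤ) l v) Ω := eulerFall_analytic _ l hva
          have hEq : Set.EqOn (iteratedDeriv l u)
              (fun s => a * ((Nat.descFactorial l l : ℂ) * Complex.log s + bSeq l l)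
                + ((Nat.descFactorial l l : ℂ) * b + eulerFall (l : ℤ) l v s)) Ω := by
            intro s hs
            have h1 := (ih s hs).1 le_rfl
            have h2 := eulerFall_const_add hΩ l l le_rfl b hva hs
            simp only [sub_self, zpow_zero, mul_one, one_mul] at h1
            rw [h1, h2]
          rw [iteratedDeriv_succ,
            Filter.EventuallyEq.deriv_eq (Filter.eventuallyEq_of_mem (hΩ.mem_nhds ht) hEq)]
          have hGd := ((hGa t ht).differentiableAt).hasDerivAt
          have hD : HasDerivAt
              (fun s : ℂ => a * ((Nat.descFactorial l l : ℂ) * Complex.log s + bSeq l l)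
                + ((Nat.descFactorial l l : ℂ) * b + eulerFall (l : ℤ) l v s))
              (a * ((Nat.descFactorial l l : ℂ) * t⁻¹)
                + deriv (eulerFall (l : ℤ) l v) t) t :=
            ((((Complex.hasDerivAt_log hts).const_mul _).add_const _).const_mul a).add
              (hGd.const_add _)
          rw [hD.deriv]
          rw [eulerFall_succ_eq hΩ (l : ℤ) l hva ht]
          rw [show ((l : ℤ) - ((l + 1 : ℕ) : ℤ)) = -1 by push_cast; ring]
          simp only [show l + 1 - l - 1 = 0 from by omega, pow_zero, Nat.factorial_zero,
            Nat.cast_one, Nat.descFactorial_self, zpow_neg_one]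
          field_simp
          push_cast
          ring
        · -- l + 1 ≤ j
          have hlj : l + 1 ≤ j := hlt
          have hFa : AnalyticOnNhd ℂ (eulerFall (l : ℤ) j v) Ω := eulerFall_analytic _ j hva
          have hEq : Set.EqOn (iteratedDeriv j u)
              (fun s => (-1 : ℂ) ^ (j - l - 1) * (Nat.factorial l : ℂ)
                  * (Nat.factorial (j - l - 1) : ℂ) * a * s ^ ((l : ℤ) - (j : ℤ))
                + s ^ ((l : ℤ) - (j : ℤ)) * eulerFall (l : ℤ) j v s) Ω :=
            fun s hs => (ih s hs).2 hlj
          rw [iteratedDeriv_succ,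
            Filter.EventuallyEq.deriv_eq (Filter.eventuallyEq_of_mem (hΩ.mem_nhds ht) hEq)]
          have hpow := hasDerivAt_zpow ((l : ℤ) - (j : ℤ)) t (Or.inl ht0)
          have hFd := ((hFa t ht).differentiableAt).hasDerivAt
          have hD : HasDerivAt
              (fun s : ℂ => (-1 : ℂ) ^ (j - l - 1) * (Nat.factorial l : ℂ)
                  * (Nat.factorial (j - l - 1) : ℂ) * a * s ^ ((l : ℤ) - (j : ℤ))
                + s ^ ((l : ℤ) - (j : ℤ)) * eulerFall (l : ℤ) j v s)
              ((-1 : ℂ) ^ (j - l - 1) * (Nat.factorial l : ℂ)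
                  * (Nat.factorial (j - l - 1) : ℂ) * a
                  * ((((l : ℤ) - (j : ℤ) : ℤ) : ℂ) * t ^ ((l : ℤ) - (j : ℤ) - 1))
                + (((((l : ℤ) - (j : ℤ) : ℤ) : ℂ) * t ^ ((l : ℤ) - (j : ℤ) - 1))
                      * eulerFall (l : ℤ) j v t
                  + t ^ ((l : ℤ) - (j : ℤ)) * deriv (eulerFall (l : ℤ) j v) t)) t :=
            (hpow.const_mul _).add (hpow.mul hFd)
          rw [hD.deriv]
          rw [eulerFall_succ_eq hΩ (l : ℤ) j hva ht]
          rw [show ((l : ℤ) - ((j + 1 : ℕ) : ℤ)) = (l : ℤ) - (j : ℤ) - 1 by push_cast; ring]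
          rw [show t ^ ((l : ℤ) - (j : ℤ)) = t ^ ((l : ℤ) - (j : ℤ) - 1) * t by
            rw [← zpow_add_one₀ ht0, sub_add_cancel]]
          rw [show j + 1 - l - 1 = (j - l - 1) + 1 from by omega, pow_succ, Nat.factorial_succ]
          have hc1 : ((j - l - 1 : ℕ) : ℂ) = (j : ℂ) - (l : ℂ) - 1 := by
            have h : (j - l - 1 : ℕ) = j - (l + 1) := by omega
            rw [h, Nat.cast_sub hlj]
            push_cast
            ring
          push_cast [hc1]
          ring
      done
  intro t ht j
  have ht0 : t ≠ 0 := Complex.slitPlane_ne_zero (hΩslit ht)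
  have hexp : (j : ℤ) - (l : ℤ) + ((l : ℤ) - (j : ℤ)) = 0 := by ring
  have hinv : t ^ ((j : ℤ) - (l : ℤ)) * t ^ ((l : ℤ) - (j : ℤ)) = 1 := by
    rw [← zpow_add₀ ht0, hexp, zpow_zero]
  have cancel : ∀ X Y : ℂ,
      t ^ ((j : ℤ) - (l : ℤ)) * (X * t ^ ((l : ℤ) - (j : ℤ)) + t ^ ((l : ℤ) - (j : ℤ)) * Y)
        = X + Y := by
    intro X Y
    calc t ^ ((j : ℤ) - (l : ℤ)) * (X * t ^ ((l : ℤ) - (j : ℤ)) + t ^ ((l : ℤ) - (j : ℤ)) * Y)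
        = (t ^ ((j : ℤ) - (l : ℤ)) * t ^ ((l : ℤ) - (j : ℤ))) * (X + Y) := by ring
      _ = X + Y := by rw [hinv, one_mul]
  obtain ⟨h1, h2⟩ := key j t ht
  exact ⟨fun hj => by rw [h1 hj, cancel], fun hj => by rw [h2 hj, cancel]⟩
end

section
/- (Nagumo's Lemma) Let n ≥ 1 be an integer, R > 0, and let b ≥ 0 and C ≥ 0 be real numbers. Let φ : ℂⁿ → ℂ be holomorphic on the polydisc D_R. If for every r with 0 < r < R one has |φ(x)| ≤ C/(R − r)^b for all x ∈ D_r, then for every r with 0 < r < R, every coordinate index i ∈ {1, …, n}, and every x ∈ D_r, the i-th partial derivative satisfies |∂φ/∂x_i (x)| ≤ e·(b + 1)·C/(R − r)^(b+1). -/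
open Metric Set

/-- **Nagumo's Lemma.** If `φ` is holomorphic on the polydisc `D_R ⊆ ℂⁿ`
and `|φ(x)| ≤ C/(R-r)^b` on `D_r` for every `0 < r < R`, then each first-order partial
derivative satisfies `|∂φ/∂x_i(x)| ≤ e·(b+1)·C/(R-r)^(b+1)` on `D_r` for every
`0 < r < R`. -/
theorem stmt_7 (n : ℕ) (hn : 1 ≤ n) (R b C : ℝ) (hR : 0 < R) (hb : 0 ≤ b) (hC : 0 ≤ C)
    (φ : (Fin n → ℂ) → ℂ)
    (hφ : DifferentiableOn ℂ φ {x | ∀ i, ‖x i‖ < R})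
    (hbound : ∀ r : ℝ, 0 < r → r < R → ∀ x : Fin n → ℂ,
      (∀ i, ‖x i‖ < r) → ‖φ x‖ ≤ C / (R - r) ^ b) :
    ∀ r : ℝ, 0 < r → r < R → ∀ i : Fin n, ∀ x : Fin n → ℂ,
      (∀ i', ‖x i'‖ < r) →
      ‖fderiv ℂ φ x (Pi.single i 1)‖ ≤
        Real.exp 1 * (b + 1) * C / (R - r) ^ (b + 1) := by
  intro r hr hrR i x hx
  have hb1 : (0:ℝ) < b + 1 := by linarith
  set s : ℝ := 1 / (b + 1) with hs_def
  have hs : 0 < s := by positivity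
  set θ : ℝ := 1 - Real.exp (-s) with hθ_def
  have hθ0 : 0 < θ := by
    have : Real.exp (-s) < 1 := Real.exp_lt_one_iff.mpr (by linarith)
    simp [hθ_def]; linarith
  have hθ1 : θ < 1 := by
    have : 0 < Real.exp (-s) := Real.exp_pos _
    simp [hθ_def]; linarith
  have hA : (0:ℝ) < R - r := by linarith
  set δ : ℝ := θ * (R - r) with hδ_def
  have hδ : 0 < δ := mul_pos hθ0 hA
  have hrδR : r + δ < R := by
    have : δ < R - r := by
      rw [hδ_def]
      nlinarith
    linarith
  -- the open polydisc is open
  have hopen : IsOpen {x : Fin n → ℂ | ∀ i, ‖x i‖ < R} := by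
    have : {x : Fin n → ℂ | ∀ i, ‖x i‖ < R}
        = ⋂ i, (fun x : Fin n → ℂ => x i) ⁻¹' {z : ℂ | ‖z‖ < R} := by
      ext y; simp [Set.mem_iInter]
    rw [this]
    exact isOpen_iInter_of_finite fun i =>
      (isOpen_lt (by continuity) continuous_const).preimage (continuous_apply i)
  -- the one-variable slice
  set g : ℂ → ℂ := fun z => φ (Function.update x i z) with hg_def
  have hmem : ∀ z : ℂ, ‖z‖ ≤ ‖x i‖ + δ →
      Function.update x i z ∈ {x : Fin n → ℂ | ∀ i, ‖x i‖ < R} := by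
    intro z hz j
    rcases eq_or_ne j i with rfl | hj
    · rw [Function.update_self]
      calc ‖z‖ ≤ ‖x j‖ + δ := hz
        _ < r + δ := by linarith [hx j]
        _ < R := hrδR
    · rw [Function.update_of_ne hj]
      exact lt_trans (hx j) hrR
  have hxmem : x ∈ {x : Fin n → ℂ | ∀ i, ‖x i‖ < R} := fun j =>
    lt_trans (hx j) hrR
  -- g is differentiable on the closed ball
  have hgd : DifferentiableOn ℂ g (closedBall (x i) δ) := by
    intro z hz
    have hzmem : Function.update x i z ∈ {x : Fin n → ℂ | ∀ i, ‖x i‖ < R} := by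
      apply hmem
      have := mem_closedBall_iff_norm.mp hz
      calc ‖z‖ = ‖z - x i + x i‖ := by ring_nf
        _ ≤ ‖z - x i‖ + ‖x i‖ := norm_add_le _ _
        _ ≤ δ + ‖x i‖ := by
            have : ‖z - x i‖ ≤ δ := this
            linarith
        _ = ‖x i‖ + δ := by ring
    have h1 : DifferentiableAt ℂ φ (Function.update x i z) :=
      (hφ (Function.update x i z) hzmem).differentiableAt (hopen.mem_nhds hzmem)
    exact (h1.comp z (hasDerivAt_update x i z).differentiableAt).differentiableWithinAt
  have hdcc : DiffContOnCl ℂ g (ball (x i) δ) := by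
    apply DifferentiableOn.diffContOnCl
    rwa [closure_ball _ hδ.ne']
  -- derivative of g at x i equals the partial derivative
  have hφx : DifferentiableAt ℂ φ x :=
    (hφ x hxmem).differentiableAt (hopen.mem_nhds hxmem)
  have hder : HasDerivAt g (fderiv ℂ φ x (Pi.single i 1)) (x i) := by
    have hupd : Function.update x i (x i) = x := Function.update_eq_self i x
    have hφx' : HasFDerivAt φ (fderiv ℂ φ x) (Function.update x i (x i)) := by
      rw [hupd]; exact hφx.hasFDerivAt
    have h := hφx'.comp_hasDerivAt (x i) (hasDerivAt_update x i (x i))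
    exact h
  -- boundary bound
  set M : ℝ := C / (R - (r + δ)) ^ b with hM_def
  have hsphere : ∀ z ∈ sphere (x i) δ, ‖g z‖ ≤ M := by
    intro z hz
    have hz' : ‖z - x i‖ = δ := mem_sphere_iff_norm.mp hz
    apply hbound (r + δ) (by linarith) hrδR
    intro j
    rcases eq_or_ne j i with rfl | hj
    · rw [Function.update_self]
      calc ‖z‖ = ‖z - x j + x j‖ := by ring_nf
        _ ≤ ‖z - x j‖ + ‖x j‖ := norm_add_le _ _
        _ = δ + ‖x j‖ := by rw [hz']
        _ < δ + r := by linarith [hx j]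
        _ = r + δ := by ring
    · rw [Function.update_of_ne hj]
      linarith [hx j]
  have hcauchy : ‖fderiv ℂ φ x (Pi.single i 1)‖ ≤ M / δ := by
    rw [← hder.deriv]
    exact Complex.norm_deriv_le_of_forall_mem_sphere_norm_le hδ hdcc hsphere
  -- arithmetic
  have hkey : M / δ ≤ Real.exp 1 * (b + 1) * C / (R - r) ^ (b + 1) := by
    have hRr : R - (r + δ) = (R - r) * Real.exp (-s) := by
      rw [hδ_def, hθ_def]; ring
    have hpow : (R - (r + δ)) ^ b = (R - r) ^ b * Real.exp (-s * b) := by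
      rw [hRr, Real.mul_rpow hA.le (Real.exp_pos _).le,
        Real.rpow_def_of_pos (Real.exp_pos _), Real.log_exp]
    have hpow2 : (R - r) ^ (b + 1) = (R - r) ^ b * (R - r) := by
      rw [Real.rpow_add hA, Real.rpow_one]
    rw [hM_def, hpow, hpow2, hδ_def]
    rw [div_div, div_le_div_iff₀ (by positivity) (by positivity)]
    -- C * ((R-r)^b * (R-r)) ≤ e(b+1)C * ((R-r)^b * exp(-s b) * (θ(R-r)))
    have hAb : (0:ℝ) < (R - r) ^ b := Real.rpow_pos_of_pos hA b
    have key : 1 ≤ Real.exp 1 * (b + 1) * (Real.exp (-s * b) * θ) := by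
      have h1 : Real.exp 1 * Real.exp (-s * b) = Real.exp s := by
        rw [← Real.exp_add]
        congr 1
        have h6' : (b + 1) * s = 1 := by rw [hs_def, mul_one_div_cancel hb1.ne']
        linear_combination -h6'
      have h2 : s + 1 ≤ Real.exp s := Real.add_one_le_exp s
      have h3 : Real.exp 1 * (b + 1) * (Real.exp (-s * b) * θ)
          = (b + 1) * (Real.exp s * θ) := by
        rw [← h1]; ring
      rw [h3, hθ_def]
      have h4 : Real.exp s * (1 - Real.exp (-s)) = Real.exp s - 1 := by
        rw [mul_sub, ← Real.exp_add]
        simp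
      rw [h4]
      have h5 : s ≤ Real.exp s - 1 := by linarith
      have h6 : (b + 1) * s = 1 := by rw [hs_def, mul_one_div_cancel hb1.ne']
      calc (1:ℝ) = (b + 1) * s := h6.symm
        _ ≤ (b + 1) * (Real.exp s - 1) := by
            apply mul_le_mul_of_nonneg_left h5 hb1.le
    nlinarith [mul_le_mul_of_nonneg_left key (mul_nonneg hC (mul_nonneg hAb.le hA.le)),
      Real.exp_pos (-s * b), hAb, hA, hθ0]
  exact hcauchy.trans hkey
end

section
/- Let n ≥ 1 be an integer, R > 0, and let b ≥ 0 and C ≥ 0 be real numbers. Let φ : ℂⁿ → ℂ be holomorphic on the polydisc D_R and suppose that for every r with 0 < r < R one has |φ(x)| ≤ C/(R − r)^b for all x ∈ D_r. Then for every multi-index α ∈ ℕⁿ, every r with 0 < r < R, and every x ∈ D_r, the iterated partial derivative satisfies |∂_x^α φ(x)| ≤ e^{|α|} · (b+1)(b+2)⋯(b+|α|) · C/(R − r)^(b+|α|). -/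
/-- First-order partial complex derivative in the `i`-th coordinate of `ℂⁿ`. -/
noncomputable def pderivC {n : ℕ} (i : Fin n) (φ : (Fin n → ℂ) → ℂ) :
    (Fin n → ℂ) → ℂ :=
  fun x => fderiv ℂ φ x (Pi.single i 1)

/-- Iterated partial complex derivatives along a list of coordinate directions. -/
noncomputable def mderivC {n : ℕ} : List (Fin n) → ((Fin n → ℂ) → ℂ) →
    (Fin n → ℂ) → ℂ
  | [], φ => φ
  | i :: L, φ => pderivC i (mderivC L φ)

/-- The list of directions encoding a multi-index `α : Fin n → ℕ`
(direction `i` repeated `α i` times). -/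
def indexList {n : ℕ} (α : Fin n → ℕ) : List (Fin n) :=
  (List.finRange n).foldr (fun i L => List.replicate (α i) i ++ L) []
set_option maxHeartbeats 1000000

open Metric Set Real intervalIntegral

variable {n : ℕ}

lemma slice_hasDerivAt {U : Set (Fin n → ℂ)} (hU : IsOpen U) {ψ : (Fin n → ℂ) → ℂ}
    (hψ : DifferentiableOn ℂ ψ U) {x v : Fin n → ℂ} {z : ℂ} (h : x + z • v ∈ U) :
    HasDerivAt (fun w : ℂ => ψ (x + w • v)) (fderiv ℂ ψ (x + z • v) v) z := by
  have h1 : HasDerivAt (fun w : ℂ => x + w • v) v z := by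
    simpa using ((hasDerivAt_id z).smul_const v).const_add x
  have h2 : HasFDerivAt ψ (fderiv ℂ ψ (x + z • v)) (x + z • v) :=
    (hψ.differentiableAt (hU.mem_nhds h)).hasFDerivAt
  exact h2.comp_hasDerivAt z h1

lemma cauchy_slice_est {U : Set (Fin n → ℂ)} (hU : IsOpen U) {ψ : (Fin n → ℂ) → ℂ}
    (hψ : DifferentiableOn ℂ ψ U) {x v : Fin n → ℂ} {ρ M : ℝ} (hρ : 0 < ρ)
    (hsub : ∀ z : ℂ, ‖z‖ ≤ ρ → x + z • v ∈ U)
    (hM : ∀ z : ℂ, ‖z‖ = ρ → ‖ψ (x + z • v)‖ ≤ M) :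
    ‖fderiv ℂ ψ x v‖ ≤ M / ρ := by
  set g : ℂ → ℂ := fun w => ψ (x + w • v) with hg
  have hdiff : DifferentiableOn ℂ g (closedBall 0 ρ) := by
    intro z hz
    exact (slice_hasDerivAt hU hψ (hsub z (by
      simpa using mem_closedBall_zero_iff.mp hz))).differentiableAt.differentiableWithinAt
  have hcl : DiffContOnCl ℂ g (ball 0 ρ) := by
    refine ⟨hdiff.mono ball_subset_closedBall, ?_⟩
    rw [closure_ball 0 hρ.ne']
    exact hdiff.continuousOn
  have hder : deriv g 0 = fderiv ℂ ψ x v := by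
    have := slice_hasDerivAt hU hψ (x := x) (v := v) (z := 0)
      (by simpa using hsub 0 (by simp [hρ.le]))
    simpa using this.deriv
  have := Complex.norm_deriv_le_of_forall_mem_sphere_norm_le hρ hcl
    (fun z hz => hM z (by simpa using mem_sphere_zero_iff_norm.mp hz))
  rwa [hder] at this

lemma fderiv_opNorm_le {U : Set (Fin n → ℂ)} (hU : IsOpen U) {ψ : (Fin n → ℂ) → ℂ}
    (hψ : DifferentiableOn ℂ ψ U) {y : Fin n → ℂ} {δ M : ℝ} (hδ : 0 < δ)
    (hsub : closedBall y δ ⊆ U) (hM : ∀ p ∈ closedBall y δ, ‖ψ p‖ ≤ M) :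
    ‖fderiv ℂ ψ y‖ ≤ M / δ := by
  have hM0 : 0 ≤ M := le_trans (norm_nonneg _) (hM y (mem_closedBall_self hδ.le))
  refine ContinuousLinearMap.opNorm_le_bound _ (div_nonneg hM0 hδ.le) fun v => ?_
  rcases eq_or_ne v 0 with rfl | hv
  · simp
  · have hvn : 0 < ‖v‖ := norm_pos_iff.mpr hv
    have hρ : 0 < δ / ‖v‖ := div_pos hδ hvn
    have key : ‖fderiv ℂ ψ y v‖ ≤ M / (δ / ‖v‖) := by
      refine cauchy_slice_est hU hψ hρ (fun z hz => hsub ?_) (fun z hz => hM _ ?_)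
      · rw [mem_closedBall, dist_eq_norm, add_sub_cancel_left, norm_smul]
        calc ‖z‖ * ‖v‖ ≤ δ / ‖v‖ * ‖v‖ := by gcongr
          _ = δ := div_mul_cancel₀ _ hvn.ne'
      · rw [mem_closedBall, dist_eq_norm, add_sub_cancel_left, norm_smul, hz]
        exact le_of_eq (div_mul_cancel₀ _ hvn.ne')
    calc ‖fderiv ℂ ψ y v‖ ≤ M / (δ / ‖v‖) := key
      _ = M / δ * ‖v‖ := by field_simp

lemma norm_smul_single_le (i : Fin n) (z : ℂ) :
    ‖z • (Pi.single i 1 : Fin n → ℂ)‖ ≤ ‖z‖ := by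
  rw [norm_smul]
  have h1 : ‖(Pi.single i 1 : Fin n → ℂ)‖ ≤ 1 := by
    refine (pi_norm_le_iff_of_nonneg zero_le_one).mpr fun j => ?_
    rcases eq_or_ne j i with rfl | hj
    · simp
    · simp [Pi.single_apply, hj]
  calc ‖z‖ * ‖(Pi.single i 1 : Fin n → ℂ)‖ ≤ ‖z‖ * 1 := by gcongr
    _ = ‖z‖ := mul_one _

lemma pderivC_differentiableAt {U : Set (Fin n → ℂ)} (hU : IsOpen U) {ψ : (Fin n → ℂ) → ℂ}
    (hψ : DifferentiableOn ℂ ψ U) (i : Fin n) {x₀ : Fin n → ℂ} (hx₀ : x₀ ∈ U) :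
    DifferentiableAt ℂ (fun x => fderiv ℂ ψ x (Pi.single i 1)) x₀ := by
  obtain ⟨ε, hε, hball⟩ := isOpen_iff.mp hU x₀ hx₀
  obtain ⟨δ, hδ, h5⟩ : ∃ δ : ℝ, 0 < δ ∧ 5 * δ ≤ ε := ⟨ε / 5, by positivity, by linarith⟩
  have hsub4 : closedBall x₀ (4 * δ) ⊆ U := by
    refine subset_trans (fun p hp => ?_) hball
    rw [mem_closedBall] at hp
    rw [mem_ball]
    linarith
  set v : Fin n → ℂ := Pi.single i 1 with hv
  have hvle : ∀ z : ℂ, ‖z • v‖ ≤ ‖z‖ := norm_smul_single_le i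
  obtain ⟨M, hM⟩ : ∃ M, ∀ p ∈ closedBall x₀ (4 * δ), ‖ψ p‖ ≤ M :=
    (isCompact_closedBall x₀ (4 * δ)).exists_bound_of_continuousOn
      (hψ.continuousOn.mono hsub4)
  have hM0 : 0 ≤ M := le_trans (norm_nonneg _) (hM x₀ (mem_closedBall_self (by positivity)))
  have hmem : ∀ x ∈ ball x₀ δ, ∀ z : ℂ, ‖z‖ ≤ δ → x + z • v ∈ closedBall x₀ (2 * δ) := by
    intro x hx z hz
    rw [mem_closedBall, dist_eq_norm]
    calc ‖x + z • v - x₀‖ ≤ ‖x - x₀‖ + ‖z • v‖ := by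
          simpa [add_sub_right_comm] using norm_add_le (x - x₀) (z • v)
      _ ≤ δ + δ := add_le_add (le_of_lt (mem_ball_iff_norm.mp hx)) ((hvle z).trans hz)
      _ = 2 * δ := by ring
  have hsub2 : closedBall x₀ (2 * δ) ⊆ U := fun p hp => hsub4 (by
    rw [mem_closedBall] at hp ⊢; linarith)
  -- Lipschitz bound for ψ on ball x₀ (3δ)
  have hLip : LipschitzOnWith (Real.toNNReal (M / δ)) ψ (ball x₀ (3 * δ)) := by
    refine Convex.lipschitzOnWith_of_nnnorm_fderiv_le (𝕜 := ℂ) (fun y hy => ?_) (fun y hy => ?_)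
      (convex_ball _ _)
    · exact hψ.differentiableAt (hU.mem_nhds (hball (by
        rw [mem_ball] at hy ⊢; linarith)))
    · rw [← NNReal.coe_le_coe, coe_nnnorm, Real.coe_toNNReal _ (by positivity)]
      refine fderiv_opNorm_le hU hψ hδ (fun p hp => hsub4 ?_) (fun p hp => hM p ?_) <;>
      · rw [mem_closedBall] at hp ⊢
        rw [mem_ball] at hy
        have := dist_triangle p y x₀
        linarith
  set c : ℝ → ℂ := fun θ => deriv (circleMap 0 δ) θ * (circleMap 0 δ θ) ^ (-2 : ℤ) with hc
  set F : (Fin n → ℂ) → ℝ → ℂ := fun x θ => c θ * ψ (x + circleMap 0 δ θ • v) with hF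
  have habs : ∀ θ : ℝ, ‖circleMap 0 δ θ‖ = δ := by
    intro θ
    simpa [abs_of_pos hδ] using Complex.abs_circleMap_zero δ θ
  have hcn : ∀ θ, ‖c θ‖ = δ⁻¹ := by
    intro θ
    rw [hc]
    rw [norm_mul, deriv_circleMap, norm_mul, norm_zpow, habs, Complex.norm_I]
    rw [zpow_neg, zpow_two]
    field_simp
  have hcont_c : Continuous c := by
    refine (Continuous.mul ?_ ?_)
    · have heq : deriv (circleMap 0 δ) = fun θ => circleMap 0 δ θ * Complex.I :=
        funext fun θ => deriv_circleMap 0 δ θ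
      rw [heq]
      exact (continuous_circleMap 0 δ).mul continuous_const
    · exact (continuous_circleMap 0 δ).zpow₀ _ (fun θ => Or.inl (circleMap_ne_center hδ.ne'))
  have hpath : ∀ x ∈ ball x₀ δ, Continuous fun θ : ℝ => ψ (x + circleMap 0 δ θ • v) := by
    intro x hx
    refine hψ.continuousOn.comp_continuous ?_ ?_
    · exact continuous_const.add ((continuous_circleMap 0 δ).smul continuous_const)
    · intro θ
      exact hsub2 (hmem x hx _ (le_of_eq (habs θ)))
  have hFcont : ∀ x ∈ ball x₀ δ, Continuous (F x) := fun x hx => hcont_c.mul (hpath x hx)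
  set F' : ℝ → (Fin n → ℂ) →L[ℂ] ℂ := fun θ => c θ • fderiv ℂ ψ (x₀ + circleMap 0 δ θ • v) with hF'
  have hx₀ball : x₀ ∈ ball x₀ δ := mem_ball_self hδ
  have h1 : ∀ᶠ x in nhds x₀, MeasureTheory.AEStronglyMeasurable (F x)
      (MeasureTheory.volume.restrict (Set.uIoc (0:ℝ) (2 * Real.pi))) := by
    filter_upwards [ball_mem_nhds x₀ hδ] with x hx
    exact (hFcont x hx).aestronglyMeasurable
  have h2 : IntervalIntegrable (F x₀) MeasureTheory.volume 0 (2 * Real.pi) :=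
    (hFcont x₀ hx₀ball).intervalIntegrable 0 (2 * Real.pi)
  have h3 : MeasureTheory.AEStronglyMeasurable F'
      (MeasureTheory.volume.restrict (Set.uIoc (0:ℝ) (2 * Real.pi))) := by
    have hm : Measurable fun θ : ℝ => fderiv ℂ ψ (x₀ + circleMap 0 δ θ • v) := by
      refine (measurable_fderiv ℂ ψ).comp ?_
      exact (continuous_const.add ((continuous_circleMap 0 δ).smul continuous_const)).measurable
    exact hcont_c.aestronglyMeasurable.smul hm.aestronglyMeasurable
  have h4 : ∀ᵐ t ∂(MeasureTheory.volume), t ∈ Set.uIoc (0:ℝ) (2 * Real.pi) →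
      LipschitzOnWith (Real.nnabs (δ⁻¹ * (M / δ))) (fun x => F x t) (ball x₀ δ) := by
    refine MeasureTheory.ae_of_all _ fun θ _ => ?_
    have hnn : (0:ℝ) ≤ δ⁻¹ * (M / δ) := by positivity
    rw [lipschitzOnWith_iff_dist_le_mul]
    intro x hx y hy
    have hxy : ∀ w ∈ ball x₀ δ, w + circleMap 0 δ θ • v ∈ ball x₀ (3 * δ) := by
      intro w hw
      have := hmem w hw _ (le_of_eq (habs θ))
      rw [mem_closedBall] at this
      rw [mem_ball]
      linarith
    have hd : dist (F x θ) (F y θ) = ‖c θ‖ * dist (ψ (x + circleMap 0 δ θ • v))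
        (ψ (y + circleMap 0 δ θ • v)) := by
      rw [hF]
      simp only [dist_eq_norm]
      rw [← norm_mul, mul_sub]
    rw [hd, hcn]
    have hlip2 := (lipschitzOnWith_iff_dist_le_mul.mp hLip) _ (hxy x hx) _ (hxy y hy)
    rw [Real.coe_toNNReal _ (by positivity)] at hlip2
    have hdd : dist (x + circleMap 0 δ θ • v) (y + circleMap 0 δ θ • v) = dist x y :=
      dist_add_right x y _
    rw [hdd] at hlip2
    calc δ⁻¹ * dist (ψ (x + circleMap 0 δ θ • v)) (ψ (y + circleMap 0 δ θ • v))
        ≤ δ⁻¹ * (M / δ * dist x y) := by gcongr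
      _ = ↑(Real.nnabs (δ⁻¹ * (M / δ))) * dist x y := by
          rw [Real.coe_nnabs, abs_of_nonneg hnn]; ring
  have h6 : ∀ᵐ t ∂(MeasureTheory.volume), t ∈ Set.uIoc (0:ℝ) (2 * Real.pi) →
      HasFDerivAt (fun x => F x t) (F' t) x₀ := by
    refine MeasureTheory.ae_of_all _ fun θ _ => ?_
    have hA : HasFDerivAt (fun x : Fin n → ℂ => x + circleMap 0 δ θ • v)
        (ContinuousLinearMap.id ℂ (Fin n → ℂ)) x₀ := (hasFDerivAt_id x₀).add_const _
    have hp : x₀ + circleMap 0 δ θ • v ∈ U := hsub2 (hmem x₀ hx₀ball _ (le_of_eq (habs θ)))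
    have hB : HasFDerivAt ψ (fderiv ℂ ψ (x₀ + circleMap 0 δ θ • v)) _ :=
      (hψ.differentiableAt (hU.mem_nhds hp)).hasFDerivAt
    have hC := (hB.comp x₀ hA).const_mul (c θ)
    simpa [hF', ContinuousLinearMap.comp_id] using hC
  have key := intervalIntegral.hasFDerivAt_integral_of_dominated_loc_of_lip
    (bound := fun _ => δ⁻¹ * (M / δ)) (ball_mem_nhds x₀ hδ) h1 h2 h3 h4 intervalIntegrable_const h6
  have hrep : (fun x => fderiv ℂ ψ x (Pi.single i 1)) =ᶠ[nhds x₀]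
      fun x => (2 * ↑Real.pi * Complex.I)⁻¹ • ∫ θ in (0:ℝ)..2 * Real.pi, F x θ := by
    filter_upwards [ball_mem_nhds x₀ hδ] with x hx
    set g : ℂ → ℂ := fun w => ψ (x + w • v) with hg
    have hdiffg : DifferentiableOn ℂ g (closedBall 0 δ) := by
      intro z hz
      refine (slice_hasDerivAt hU hψ ?_).differentiableAt.differentiableWithinAt
      exact hsub2 (hmem x hx z (by simpa using mem_closedBall_zero_iff.mp hz))
    have hclg : DiffContOnCl ℂ g (ball 0 δ) := by
      refine ⟨hdiffg.mono ball_subset_closedBall, ?_⟩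
      rw [closure_ball 0 hδ.ne']
      exact hdiffg.continuousOn
    have hcirc : deriv g 0 = (2 * ↑Real.pi * Complex.I)⁻¹ •
        circleIntegral (fun z => (z - 0) ^ (-2 : ℤ) • g z) 0 δ := by
      have h := hclg.deriv_eq_smul_circleIntegral hδ
      rw [show circleIntegral (fun z => (z - 0) ^ (-2 : ℤ) • g z) 0 δ
          = circleIntegral (fun z => (1 / (z - 0) ^ 2) • g z) 0 δ by simp [zpow_neg, one_div],
        h, smul_smul, inv_mul_cancel₀ (by simp [Real.pi_ne_zero]), one_smul]
    have hderg : deriv g 0 = fderiv ℂ ψ x (Pi.single i 1) := by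
      have := slice_hasDerivAt hU hψ (x := x) (v := v) (z := 0)
        (hsub2 (hmem x hx 0 (by simp [hδ.le])))
      simpa [← hv] using this.deriv
    rw [← hderg, hcirc]
    congr 1
    rw [circleIntegral]
    refine intervalIntegral.integral_congr fun θ _ => ?_
    simp [hF, hc, smul_eq_mul]
    ring
  have hkey2 : DifferentiableAt ℂ (fun x => ∫ θ in (0:ℝ)..2 * Real.pi, F x θ) x₀ :=
    key.2.differentiableAt
  have hdiff2 : DifferentiableAt ℂ
      (fun x => (2 * ↑Real.pi * Complex.I)⁻¹ • ∫ θ in (0:ℝ)..2 * Real.pi, F x θ) x₀ :=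
    by have := hkey2.const_smul ((2 * ↑Real.pi * Complex.I)⁻¹); exact this
  exact hdiff2.congr_of_eventuallyEq hrep



lemma nagumo_key {c : ℝ} (hc : 0 ≤ c) :
    ∃ t : ℝ, 0 < t ∧ t < 1 ∧ 1 ≤ Real.exp 1 * (c + 1) * ((1 - t) ^ c * t) := by
  rcases eq_or_lt_of_le hc with rfl | hcpos
  · refine ⟨Real.exp (-1), Real.exp_pos _, ?_, ?_⟩
    · exact Real.exp_lt_one_iff.mpr (by norm_num)
    · simp only [Real.rpow_zero, zero_add, one_mul, mul_one]
      rw [← Real.exp_add]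
      norm_num
  · refine ⟨1 / (c + 1), by positivity, ?_, ?_⟩
    · rw [div_lt_one (by linarith)]; linarith
    · have h1t : 1 - 1 / (c + 1) = c / (c + 1) := by field_simp; ring
      rw [h1t]
      have hkey : (c + 1) ^ c ≤ Real.exp 1 * c ^ c := by
        have he : c + 1 = c * (1 + 1 / c) := by field_simp
        have h2 : (1 + 1 / c : ℝ) ≤ Real.exp (1 / c) := by
          have := Real.add_one_le_exp (1 / c)
          linarith
        calc (c + 1) ^ c = (c * (1 + 1 / c)) ^ c := by rw [← he]
          _ = c ^ c * (1 + 1 / c) ^ c := Real.mul_rpow hc (by positivity)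
          _ ≤ c ^ c * Real.exp (1 / c) ^ c := by
              have := Real.rpow_le_rpow (by positivity : (0:ℝ) ≤ 1 + 1/c) h2 hc
              have hcc : (0:ℝ) ≤ c ^ c := Real.rpow_nonneg hc c
              exact mul_le_mul_of_nonneg_left this hcc
          _ = c ^ c * Real.exp (1 / c * c) := by rw [← Real.exp_mul]
          _ = Real.exp 1 * c ^ c := by
              rw [one_div, inv_mul_cancel₀ hcpos.ne']; ring
      have hd : (c / (c + 1)) ^ c = c ^ c / (c + 1) ^ c := Real.div_rpow hc (by positivity) c
      have heq : Real.exp 1 * (c + 1) * ((c / (c + 1)) ^ c * (1 / (c + 1)))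
          = Real.exp 1 * c ^ c / (c + 1) ^ c := by
        rw [hd]; field_simp
      rw [heq, le_div_iff₀ (by positivity : (0:ℝ) < (c + 1) ^ c), one_mul]
      exact hkey

lemma nagumo_step {n : ℕ} {R : ℝ} (hR : 0 < R) {c M : ℝ} (hc : 0 ≤ c) (hM : 0 ≤ M)
    {ψ : (Fin n → ℂ) → ℂ} (hψ : DifferentiableOn ℂ ψ (ball (0 : Fin n → ℂ) R))
    (hbd : ∀ r : ℝ, 0 < r → r < R → ∀ x ∈ ball (0 : Fin n → ℂ) r, ‖ψ x‖ ≤ M / (R - r) ^ c)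
    (i : Fin n) :
    ∀ r : ℝ, 0 < r → r < R → ∀ x ∈ ball (0 : Fin n → ℂ) r,
      ‖fderiv ℂ ψ x (Pi.single i 1)‖ ≤ Real.exp 1 * (c + 1) * M / (R - r) ^ (c + 1) := by
  intro r hr hrR x hx
  obtain ⟨t, ht0, ht1, hkey⟩ := nagumo_key hc
  set d : ℝ := R - r with hd
  have hd0 : 0 < d := by simp [hd]; linarith
  set ρ : ℝ := t * d with hρdef
  have hρ : 0 < ρ := mul_pos ht0 hd0
  have hρd : ρ < d := by
    calc ρ = t * d := rfl
      _ < 1 * d := by gcongr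
      _ = d := one_mul d
  have hv := norm_smul_single_le (n := n) i
  have hmem : ∀ z : ℂ, ‖z‖ ≤ ρ → x + z • (Pi.single i 1 : Fin n → ℂ) ∈ ball (0 : Fin n → ℂ) (r + ρ) := by
    intro z hz
    rw [mem_ball_zero_iff]
    calc ‖x + z • (Pi.single i 1 : Fin n → ℂ)‖ ≤ ‖x‖ + ‖z • (Pi.single i 1 : Fin n → ℂ)‖ :=
          norm_add_le _ _
      _ < r + ρ := by
          have h1 : ‖x‖ < r := mem_ball_zero_iff.mp hx
          have h2 : ‖z • (Pi.single i 1 : Fin n → ℂ)‖ ≤ ρ := (hv z).trans hz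
          linarith
  have hrρR : r + ρ < R := by
    have : ρ < R - r := hρd
    linarith
  have hest : ‖fderiv ℂ ψ x (Pi.single i 1)‖ ≤ (M / ((1 - t) * d) ^ c) / ρ := by
    refine cauchy_slice_est isOpen_ball hψ hρ (fun z hz => ?_) (fun z hz => ?_)
    · exact ball_subset_ball (le_of_lt hrρR) (hmem z hz)
    · have hmm := hbd (r + ρ) (by linarith) hrρR _ (hmem z (le_of_eq hz))
      have : R - (r + ρ) = (1 - t) * d := by rw [hρdef, hd]; ring
      rwa [this] at hmm
  refine hest.trans ?_
  have h1t : 0 < 1 - t := by linarith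
  have hmul : ((1 - t) * d) ^ c = (1 - t) ^ c * d ^ c := Real.mul_rpow h1t.le hd0.le
  have hdc1 : d ^ (c + 1) = d ^ c * d := Real.rpow_add_one hd0.ne' c
  have hA : (0:ℝ) < (1 - t) ^ c * t := by
    have := Real.rpow_pos_of_pos h1t c
    positivity
  have hB : (0:ℝ) < d ^ c * d := by
    have := Real.rpow_pos_of_pos hd0 c
    positivity
  rw [hmul, hρdef, hdc1]
  rw [div_div, div_le_div_iff₀ (by nlinarith) (by nlinarith)]
  have expand : Real.exp 1 * (c + 1) * M * ((1 - t) ^ c * d ^ c * (t * d))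
      = (Real.exp 1 * (c + 1) * ((1 - t) ^ c * t)) * (M * (d ^ c * d)) := by ring
  rw [expand]
  calc M * (d ^ c * d) = 1 * (M * (d ^ c * d)) := (one_mul _).symm
    _ ≤ (Real.exp 1 * (c + 1) * ((1 - t) ^ c * t)) * (M * (d ^ c * d)) := by
        refine mul_le_mul_of_nonneg_right hkey ?_
        positivity
lemma length_indexList {n : ℕ} (α : Fin n → ℕ) : (indexList α).length = ∑ i, α i := by
  have h : ∀ l : List (Fin n),
      (l.foldr (fun i L => List.replicate (α i) i ++ L) []).length = (l.map α).sum := by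
    intro l
    induction l with
    | nil => simp
    | cons a l ih => simp [ih, Function.comp_def]
  rw [indexList, h, ← Fin.sum_univ_def]

/-- **iterated Nagumo.** If `φ` is holomorphic on the polydisc `D_R ⊆ ℂⁿ`
and `|φ(x)| ≤ C/(R-r)^b` on `D_r` for every `0 < r < R`, then for every multi-index `α`,
`|∂_x^α φ(x)| ≤ e^{|α|}·(b+1)(b+2)⋯(b+|α|)·C/(R-r)^(b+|α|)` on `D_r` for every
`0 < r < R`. -/
theorem stmt_8 (n : ℕ) (hn : 1 ≤ n) (R b C : ℝ) (hR : 0 < R) (hb : 0 ≤ b) (hC : 0 ≤ C)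
    (φ : (Fin n → ℂ) → ℂ)
    (hφ : DifferentiableOn ℂ φ {x | ∀ i, ‖x i‖ < R})
    (hbound : ∀ r : ℝ, 0 < r → r < R → ∀ x : Fin n → ℂ,
      (∀ i, ‖x i‖ < r) → ‖φ x‖ ≤ C / (R - r) ^ b) :
    ∀ α : Fin n → ℕ, ∀ r : ℝ, 0 < r → r < R → ∀ x : Fin n → ℂ,
      (∀ i, ‖x i‖ < r) →
      ‖mderivC (indexList α) φ x‖ ≤
        Real.exp 1 ^ (∑ i, α i) * (∏ k ∈ Finset.range (∑ i, α i), (b + k + 1)) * C /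
          (R - r) ^ (b + ∑ i, (α i : ℝ)) := by
  have hball : ∀ r : ℝ, 0 < r → ∀ x : Fin n → ℂ,
      (x ∈ ball (0 : Fin n → ℂ) r ↔ ∀ i, ‖x i‖ < r) := by
    intro r hrpos x
    rw [mem_ball_zero_iff, pi_norm_lt_iff hrpos]
  have hφ' : DifferentiableOn ℂ φ (ball (0 : Fin n → ℂ) R) := by
    refine hφ.mono fun x hx => ?_
    exact (hball R hR x).mp hx
  have main : ∀ L : List (Fin n), DifferentiableOn ℂ (mderivC L φ) (ball (0 : Fin n → ℂ) R) ∧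
      ∀ r : ℝ, 0 < r → r < R → ∀ x ∈ ball (0 : Fin n → ℂ) r,
        ‖mderivC L φ x‖ ≤
          Real.exp 1 ^ L.length * (∏ k ∈ Finset.range L.length, (b + k + 1)) * C /
            (R - r) ^ (b + L.length) := by
    intro L
    induction L with
    | nil =>
      refine ⟨hφ', fun r hr hrR x hx => ?_⟩
      have := hbound r hr hrR x ((hball r hr x).mp hx)
      simpa [mderivC] using this
    | cons i L ih =>
      obtain ⟨ihd, ihb⟩ := ih
      have hc : (0:ℝ) ≤ b + L.length := by positivity
      have hM : (0:ℝ) ≤ Real.exp 1 ^ L.length *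
          (∏ k ∈ Finset.range L.length, (b + k + 1)) * C := by
        have hprod : (0:ℝ) ≤ ∏ k ∈ Finset.range L.length, (b + k + 1) :=
          Finset.prod_nonneg fun k _ => by positivity
        positivity
      have step := nagumo_step hR hc hM ihd ihb i
      constructor
      · intro x hx
        simp only [mderivC, pderivC]
        exact (pderivC_differentiableAt isOpen_ball ihd i hx).differentiableWithinAt
      · intro r hr hrR x hx
        have hs := step r hr hrR x hx
        simp only [mderivC, pderivC]
        refine hs.trans (le_of_eq ?_)
        have hexp : b + ((L.length + 1 : ℕ) : ℝ) = (b + L.length) + 1 := by push_cast; ring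
        rw [List.length_cons, hexp, Finset.prod_range_succ]
        have hd0 : (0:ℝ) < R - r := by linarith
        rw [pow_succ]
        field_simp
  intro α r hr hrR x hx
  obtain ⟨hdiff, hbd⟩ := main (indexList α)
  have := hbd r hr hrR x ((hball r hr x).mpr hx)
  rw [length_indexList] at this
  have hcast : ((∑ i, α i : ℕ) : ℝ) = ∑ i, (α i : ℝ) := by push_cast; rfl
  rw [hcast] at this
  simpa using this
end

section
/- (Majorant functional equation.) Let m ≥ 1 be an integer, let A₁ ≥ 0, M > 0, β > 0, B ≥ 0 be real constants, let 0 < r < R, and let (G_p)_{p≥2} be nonnegative reals such that Σ_{p≥2} G_p·ρ^p < ∞ for some ρ > 0. Then there exist δ > 0 and a holomorphic function Y on { z ∈ ℂ : |z| < δ } with Y(0) = 0 such that for all |z| < δ the series Σ_{p≥2} G_p·(β·Y(z))^p/(R−r)^{m(p−1)} converges absolutely and Y(z) = A₁·z + M·[ B·z·β·Y(z)/(R−r)^m + Σ_{p≥2} G_p·(β·Y(z))^p/(R−r)^{m(p−1)} ]; moreover Y is unique as a germ: any holomorphic function Ỹ on a disc { |z| < δ′ } with Ỹ(0) = 0 satisfying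 the same equation agrees with Y on a neighborhood of 0. -/
open scoped Topology NNReal


/-- **Majorant functional equation.** For constants `A₁ ≥ 0`, `M > 0`,
`β > 0`, `B ≥ 0`, `0 < r < R`, and nonnegative `(G_p)_{p≥2}` with `Σ_{p≥2} G_p ρ^p < ∞`
for some `ρ > 0`, there is a holomorphic `Y` near `0` with `Y(0) = 0` solving
`Y = A₁z + M[ B·z·βY/(R-r)^m + Σ_{p≥2} G_p (βY)^p/(R-r)^{m(p-1)} ]`, the series
converging absolutely; moreover `Y` is unique as a germ at `0`. -/
theorem stmt_14 (m : ℕ) (hm : 1 ≤ m) (A₁ M β B r R ρ : ℝ)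
    (hA₁ : 0 ≤ A₁) (hM : 0 < M) (hβ : 0 < β) (hB : 0 ≤ B)
    (hr : 0 < r) (hrR : r < R) (G : ℕ → ℝ) (hG : ∀ p, 0 ≤ G p)
    (hρ : 0 < ρ) (hGsum : Summable fun p : ℕ => G (p + 2) * ρ ^ (p + 2)) :
    ∃ δ : ℝ, 0 < δ ∧ ∃ Y : ℂ → ℂ,
      DifferentiableOn ℂ Y (Metric.ball 0 δ) ∧ Y 0 = 0 ∧
      (∀ z : ℂ, ‖z‖ < δ →
        Summable (fun p : ℕ => ‖(G (p + 2) : ℂ) * ((β : ℂ) * Y z) ^ (p + 2) /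
          ((R : ℂ) - (r : ℂ)) ^ (m * (p + 1))‖) ∧
        ∃ S : ℂ,
          HasSum (fun p : ℕ => (G (p + 2) : ℂ) * ((β : ℂ) * Y z) ^ (p + 2) /
            ((R : ℂ) - (r : ℂ)) ^ (m * (p + 1))) S ∧
          Y z = (A₁ : ℂ) * z + (M : ℂ) *
            ((B : ℂ) * z * ((β : ℂ) * Y z) / ((R : ℂ) - (r : ℂ)) ^ m + S)) ∧
      (∀ δ' : ℝ, 0 < δ' → ∀ Y' : ℂ → ℂ,
        DifferentiableOn ℂ Y' (Metric.ball 0 δ') → Y' 0 = 0 →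
        (∀ z : ℂ, ‖z‖ < δ' → ∃ S : ℂ,
          HasSum (fun p : ℕ => (G (p + 2) : ℂ) * ((β : ℂ) * Y' z) ^ (p + 2) /
            ((R : ℂ) - (r : ℂ)) ^ (m * (p + 1))) S ∧
          Y' z = (A₁ : ℂ) * z + (M : ℂ) *
            ((B : ℂ) * z * ((β : ℂ) * Y' z) / ((R : ℂ) - (r : ℂ)) ^ m + S)) →
        ∃ δ'' : ℝ, 0 < δ'' ∧ ∀ z : ℂ, ‖z‖ < δ'' → Y' z = Y z) := by
  classical
  have hK : (0:ℝ) < R - r := sub_pos.2 hrR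
  set K : ℝ := R - r with hKdef
  set D : ℂ := (R:ℂ) - (r:ℂ) with hDdef
  have hDK : D = (K:ℂ) := by rw [hDdef, hKdef]; push_cast; ring
  have hDabs : ‖D‖ = K := by rw [hDK, Complex.norm_real, Real.norm_eq_abs, abs_of_pos hK]
  have hD0 : D ≠ 0 := by rw [hDK]; exact_mod_cast hK.ne'
  set τ : ℝ := ρ * K^m / β with hτdef
  have hτpos : 0 < τ := by positivity
  set g : ℂ → ℂ := fun w => ∑' p : ℕ,
      (G (p+2) : ℂ) * ((β:ℂ)*w)^(p+2) / D^(m*(p+1)) with hgdef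
  -- absolute value of the terms
  have habs : ∀ (w : ℂ) (p : ℕ),
      ‖(G (p+2) : ℂ) * ((β:ℂ)*w)^(p+2) / D^(m*(p+1))‖
      = G (p+2) * (β * ‖w‖)^(p+2) / K^(m*(p+1)) := by
    intro w p
    rw [norm_div, norm_mul, norm_pow, norm_mul, norm_pow, Complex.norm_real, Real.norm_eq_abs,
      Complex.norm_real, Real.norm_eq_abs, hDabs, abs_of_nonneg (hG _), abs_of_pos hβ]
  have hbound : ∀ (w : ℂ), ‖w‖ ≤ τ → ∀ p,
      ‖(G (p+2) : ℂ) * ((β:ℂ)*w)^(p+2) / D^(m*(p+1))‖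
      ≤ K^m * (G (p+2) * ρ^(p+2)) := by
    intro w hw p
    rw [habs]
    have hKm : (0:ℝ) < K^(m*(p+1)) := by positivity
    have h1 : β * ‖w‖ ≤ ρ * K^m := by
      rw [hτdef] at hw
      rw [mul_comm]
      exact (le_div_iff₀ hβ).1 hw
    have h2 : (β * ‖w‖)^(p+2) ≤ (ρ * K^m)^(p+2) :=
      pow_le_pow_left₀ (by positivity) h1 _
    have h3 : (ρ * K^m)^(p+2) = ρ^(p+2) * (K^(m*(p+1)) * K^m) := by
      rw [mul_pow, ← pow_mul, ← pow_add]
      ring_nf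
    calc G (p+2) * (β * ‖w‖)^(p+2) / K^(m*(p+1))
        ≤ G (p+2) * (ρ * K^m)^(p+2) / K^(m*(p+1)) := by gcongr; exact hG _
      _ = K^m * (G (p+2) * ρ^(p+2)) := by
          rw [h3]; field_simp
  have hsummable_bound : Summable (fun p : ℕ => K^m * (G (p+2) * ρ^(p+2))) :=
    hGsum.mul_left _
  have hsummable_abs : ∀ (w : ℂ), ‖w‖ ≤ τ →
      Summable (fun p : ℕ =>
        ‖(G (p+2) : ℂ) * ((β:ℂ)*w)^(p+2) / D^(m*(p+1))‖) := by
    intro w hw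
    exact Summable.of_nonneg_of_le (fun p => norm_nonneg _)
      (hbound w hw) hsummable_bound
  have hhassum : ∀ (w : ℂ), ‖w‖ ≤ τ →
      HasSum (fun p : ℕ => (G (p+2) : ℂ) * ((β:ℂ)*w)^(p+2) / D^(m*(p+1))) (g w) := by
    intro w hw
    have hs : Summable (fun p : ℕ => (G (p+2) : ℂ) * ((β:ℂ)*w)^(p+2) / D^(m*(p+1))) := by
      apply Summable.of_norm
      simpa using hsummable_abs w hw
    exact hs.hasSum
  -- the coefficients of the power series of g
  set a : ℕ → ℂ := fun n => if h : 2 ≤ n then (G n : ℂ) * (β:ℂ)^n / D^(m*(n-1)) else 0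
    with hadef
  have ha0 : a 0 = 0 := by simp [hadef]
  have ha1 : a 1 = 0 := by simp [hadef]
  have haterm : ∀ (w : ℂ) (p : ℕ),
      a (p+2) * w^(p+2) = (G (p+2) : ℂ) * ((β:ℂ)*w)^(p+2) / D^(m*(p+1)) := by
    intro w p
    have : a (p+2) = (G (p+2) : ℂ) * (β:ℂ)^(p+2) / D^(m*(p+1)) := by
      simp only [hadef]; rw [dif_pos (by omega : 2 ≤ p+2)]
      norm_num
    rw [this, mul_pow]
    ring
  set pn : FormalMultilinearSeries ℂ ℂ ℂ := FormalMultilinearSeries.ofScalars ℂ a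
    with hpndef
  have hpn_norm : ∀ n, ‖pn n‖ = ‖a n‖ := fun n => by
    rw [hpndef, FormalMultilinearSeries.ofScalars_norm]
  have hradius : ENNReal.ofReal τ ≤ pn.radius := by
    have hτeq : ((τ.toNNReal : ℝ≥0) : ℝ) = τ := Real.coe_toNNReal τ hτpos.le
    have hsum2 : Summable (fun n : ℕ => ‖pn (n+2)‖ * τ^(n+2)) := by
      apply Summable.of_nonneg_of_le (fun n => by positivity) _ hsummable_bound
      intro n
      rw [hpn_norm]
      have : ‖a (n+2)‖ * τ^(n+2)
          = ‖a (n+2) * ((τ:ℂ))^(n+2)‖ := by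
        rw [norm_mul, norm_pow, Complex.norm_real, Real.norm_eq_abs, abs_of_pos hτpos]
      rw [this, haterm]
      exact hbound ((τ:ℝ):ℂ) (by rw [Complex.norm_real, Real.norm_eq_abs, abs_of_pos hτpos]) n
    have hsum : Summable (fun n : ℕ => ‖pn n‖ * τ^n) := (summable_nat_add_iff 2).1 hsum2
    have := pn.le_radius_of_summable (r := τ.toNNReal) (by rwa [hτeq])
    rwa [ENNReal.ofReal] 
  have hball : HasFPowerSeriesOnBall g pn 0 (ENNReal.ofReal τ) := by
    refine ⟨hradius, ENNReal.ofReal_pos.2 hτpos, ?_⟩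
    intro y hy
    have hyτ : ‖y‖ < τ := by
      rw [EMetric.mem_ball, edist_dist, Complex.dist_eq, sub_zero] at hy
      exact (ENNReal.ofReal_lt_ofReal_iff_of_nonneg (norm_nonneg _)).1 hy
    rw [zero_add]
    have h2 : HasSum (fun p : ℕ => a (p+2) * y^(p+2)) (g y) := by
      have := hhassum y hyτ.le
      simpa [haterm] using this
    have h3 : HasSum (fun n : ℕ => a n * y^n) (g y) := by
      refine (hasSum_nat_add_iff' 2).1 ?_
      have hz : ∑ i ∈ Finset.range 2, a i * y^i = 0 := by
        simp [Finset.sum_range_succ, ha0, ha1]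
      rw [hz, sub_zero]
      exact h2
    simpa only [hpndef, FormalMultilinearSeries.ofScalars_apply_eq, smul_eq_mul] using h3
  have hg0 : g 0 = 0 := by
    rw [hgdef]
    simp
  have hgAnalytic : AnalyticAt ℂ g 0 := ⟨pn, ENNReal.ofReal τ, hball⟩
  have hgderiv : HasDerivAt g 0 0 := by
    have hd : deriv g 0 = pn.coeff 1 := (hball.hasFPowerSeriesAt).deriv
    have hc : pn.coeff 1 = 0 := by
      have : pn.coeff 1 = a 1 • (1:ℂ)^1 := by
        rw [hpndef, FormalMultilinearSeries.coeff]
        exact FormalMultilinearSeries.ofScalars_apply_eq (c := a) 1 1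
      rw [this, ha1, zero_smul]
    have := hgAnalytic.differentiableAt.hasDerivAt
    rwa [hd, hc] at this
  set c₀ : ℂ := (M:ℂ)*(B:ℂ)*(β:ℂ)/D^m with hc₀def
  set Ψ : ℂ × ℂ → ℂ × ℂ := fun q =>
      (q.1, q.2 - (A₁:ℂ)*q.1 - c₀*(q.1*q.2) - (M:ℂ)*g q.2) with hΨdef
  have hΨ00 : Ψ ((0:ℂ),(0:ℂ)) = ((0:ℂ),(0:ℂ)) := by
    simp [hΨdef, hg0]
  have hgCD : ContDiffAt ℂ 1 g 0 := hgAnalytic.contDiffAt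
  have hgsnd : ContDiffAt ℂ 1 (fun q : ℂ × ℂ => g q.2) ((0:ℂ),(0:ℂ)) :=
    ContDiffAt.comp (g := g) (f := Prod.snd) ((0:ℂ),(0:ℂ)) hgCD contDiffAt_snd
  have hΨCD : ContDiffAt ℂ 1 Ψ ((0:ℂ),(0:ℂ)) := by
    refine contDiffAt_fst.prodMk ?_
    exact ((contDiffAt_snd.sub (contDiffAt_const.mul contDiffAt_fst)).sub
      (contDiffAt_const.mul (contDiffAt_fst.mul contDiffAt_snd))).sub
      (contDiffAt_const.mul hgsnd)
  set L : (ℂ × ℂ) ≃L[ℂ] (ℂ × ℂ) :=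
    (ContinuousLinearEquiv.refl ℂ ℂ).skewProd (ContinuousLinearEquiv.refl ℂ ℂ)
      (-(A₁:ℂ) • ContinuousLinearMap.id ℂ ℂ) with hLdef
  have hL : HasFDerivAt Ψ (L : (ℂ × ℂ) →L[ℂ] (ℂ × ℂ)) ((0:ℂ),(0:ℂ)) := by
    have hfst : HasFDerivAt (fun q : ℂ × ℂ => q.1)
        (ContinuousLinearMap.fst ℂ ℂ ℂ) ((0:ℂ),(0:ℂ)) := hasFDerivAt_fst
    have hsnd : HasFDerivAt (fun q : ℂ × ℂ => q.2)
        (ContinuousLinearMap.snd ℂ ℂ ℂ) ((0:ℂ),(0:ℂ)) := hasFDerivAt_snd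
    have hA : HasFDerivAt (fun q : ℂ × ℂ => (A₁:ℂ)*q.1)
        ((A₁:ℂ) • ContinuousLinearMap.fst ℂ ℂ ℂ) ((0:ℂ),(0:ℂ)) := hfst.const_mul _
    have hmul : HasFDerivAt (fun q : ℂ × ℂ => q.1*q.2)
        (((0:ℂ),(0:ℂ)).1 • ContinuousLinearMap.snd ℂ ℂ ℂ
          + ((0:ℂ),(0:ℂ)).2 • ContinuousLinearMap.fst ℂ ℂ ℂ) ((0:ℂ),(0:ℂ)) :=
      hfst.mul hsnd
    have hmul' : HasFDerivAt (fun q : ℂ × ℂ => c₀*(q.1*q.2))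
        (c₀ • (((0:ℂ),(0:ℂ)).1 • ContinuousLinearMap.snd ℂ ℂ ℂ
          + ((0:ℂ),(0:ℂ)).2 • ContinuousLinearMap.fst ℂ ℂ ℂ)) ((0:ℂ),(0:ℂ)) :=
      hmul.const_mul _
    have hgF : HasFDerivAt g (0 : ℂ →L[ℂ] ℂ) 0 := by
      have h := hgderiv.hasFDerivAt
      have he : (ContinuousLinearMap.toSpanSingleton ℂ (0:ℂ)) = (0 : ℂ →L[ℂ] ℂ) := by
        ext x; simp
      rwa [he] at h
    have hgsndF : HasFDerivAt (fun q : ℂ × ℂ => g q.2)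
        ((0 : ℂ →L[ℂ] ℂ).comp (ContinuousLinearMap.snd ℂ ℂ ℂ)) ((0:ℂ),(0:ℂ)) :=
      HasFDerivAt.comp (g := g) (f := fun q : ℂ × ℂ => q.2) ((0:ℂ),(0:ℂ)) hgF hsnd
    have hgsndF' : HasFDerivAt (fun q : ℂ × ℂ => (M:ℂ) * g q.2)
        ((M:ℂ) • ((0 : ℂ →L[ℂ] ℂ).comp (ContinuousLinearMap.snd ℂ ℂ ℂ))) ((0:ℂ),(0:ℂ)) :=
      hgsndF.const_mul _
    have htot := hfst.prodMk (((hsnd.sub hA).sub hmul').sub hgsndF')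
    refine htot.congr_fderiv ?_
    apply ContinuousLinearMap.ext
    intro q
    simp [hLdef, ContinuousLinearEquiv.skewProd_apply]
    ring
  set F : OpenPartialHomeomorph (ℂ × ℂ) (ℂ × ℂ) := hΨCD.toOpenPartialHomeomorph Ψ hL one_ne_zero
    with hFdef
  have hFcoe : ∀ q, F q = Ψ q := fun q => rfl
  have hsrc : ((0:ℂ),(0:ℂ)) ∈ F.source :=
    hΨCD.mem_toOpenPartialHomeomorph_source hL one_ne_zero
  have htgt : ((0:ℂ),(0:ℂ)) ∈ F.target := by
    have := hΨCD.image_mem_toOpenPartialHomeomorph_target hL one_ne_zero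
    rwa [hΨ00] at this
  have hsymm00 : F.symm ((0:ℂ),(0:ℂ)) = ((0:ℂ),(0:ℂ)) := by
    have h := F.left_inv hsrc
    rw [hFcoe, hΨ00] at h
    exact h
  have hsymmCD : ContDiffAt ℂ 1 (⇑F.symm) ((0:ℂ),(0:ℂ)) := by
    have h : ContDiffAt ℂ 1 (⇑F.symm) (Ψ ((0:ℂ),(0:ℂ))) :=
      hΨCD.to_localInverse (f' := L) (hf' := hL) (hn := one_ne_zero)
    rwa [hΨ00] at h
  obtain ⟨u, hu_mem, huCD⟩ := hsymmCD.contDiffOn le_rfl (by simp)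
  have hudiff : DifferentiableOn ℂ (⇑F.symm) u := huCD.differentiableOn one_ne_zero
  set φ : ℂ → ℂ × ℂ := fun z => F.symm (z, (0:ℂ)) with hφdef
  set Y : ℂ → ℂ := fun z => (φ z).2 with hYdef
  have hY0 : Y 0 = 0 := by
    rw [hYdef, hφdef]; simp only; rw [hsymm00]
  have hφcont : ContinuousAt φ 0 := by
    have h1 : ContinuousAt (fun z : ℂ => (z, (0:ℂ))) 0 :=
      (continuous_id.prodMk continuous_const).continuousAt
    have h2 : ContinuousAt (⇑F.symm) ((0:ℂ),(0:ℂ)) :=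
      F.symm.continuousAt (by simpa using htgt)
    show ContinuousAt ((⇑F.symm) ∘ fun z : ℂ => (z, (0:ℂ))) 0
    exact ContinuousAt.comp (f := fun z : ℂ => (z, (0:ℂ))) h2 h1
  have hYcont : ContinuousAt Y 0 := by
    show ContinuousAt (Prod.snd ∘ φ) 0
    exact continuous_snd.continuousAt.comp hφcont
  -- choose δ
  have hWmem : {z : ℂ | ((z, (0:ℂ)) ∈ F.target ∩ interior u) ∧ ‖Y z‖ < τ}
      ∈ 𝓝 (0:ℂ) := by
    have hins : ((0:ℂ),(0:ℂ)) ∈ F.target ∩ interior u :=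
      ⟨htgt, mem_interior_iff_mem_nhds.2 hu_mem⟩
    have hopen : IsOpen (F.target ∩ interior u) := F.open_target.inter isOpen_interior
    have h1 : {z : ℂ | (z, (0:ℂ)) ∈ F.target ∩ interior u} ∈ 𝓝 (0:ℂ) :=
      (continuous_id.prodMk continuous_const).continuousAt.preimage_mem_nhds
        (hopen.mem_nhds hins)
    have h2 : {z : ℂ | ‖Y z‖ < τ} ∈ 𝓝 (0:ℂ) := by
      have : Y ⁻¹' (Metric.ball 0 τ) ∈ 𝓝 (0:ℂ) :=
        hYcont.preimage_mem_nhds (by rw [hY0] at *; exact Metric.ball_mem_nhds _ hτpos)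
      have he : Y ⁻¹' (Metric.ball 0 τ) = {z : ℂ | ‖Y z‖ < τ} := by
        ext z; simp [Metric.mem_ball, Complex.dist_eq]
      rwa [he] at this
    exact Filter.inter_mem h1 h2
  obtain ⟨δ, hδpos, hδsub⟩ := Metric.mem_nhds_iff.1 hWmem
  have hmem : ∀ z : ℂ, ‖z‖ < δ →
      ((z, (0:ℂ)) ∈ F.target ∩ interior u) ∧ ‖Y z‖ < τ := by
    intro z hz
    exact hδsub (by rwa [Metric.mem_ball, Complex.dist_eq, sub_zero])
  -- basic facts for |z| < δ
  have hkey : ∀ z : ℂ, ‖z‖ < δ →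
      φ z = (z, Y z) ∧ Y z = (A₁:ℂ)*z + c₀*(z*Y z) + (M:ℂ)*g (Y z) := by
    intro z hz
    obtain ⟨⟨htgtz, _⟩, _⟩ := hmem z hz
    have hright : Ψ (φ z) = (z, (0:ℂ)) := by
      have h := F.right_inv htgtz
      rw [hFcoe] at h
      exact h
    have hfst : (φ z).1 = z := congrArg Prod.fst hright
    have hsnd : (φ z).2 - (A₁:ℂ)*(φ z).1 - c₀*((φ z).1*(φ z).2) - (M:ℂ)*g (φ z).2 = 0 :=
      congrArg Prod.snd hright
    rw [hfst] at hsnd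
    constructor
    · exact Prod.ext hfst rfl
    · have hYz : (φ z).2 = Y z := rfl
      rw [hYz] at hsnd
      linear_combination hsnd
  refine ⟨δ, hδpos, Y, ?_, hY0, ?_, ?_⟩
  · -- differentiability
    intro z hz
    have hzδ : ‖z‖ < δ := by
      rwa [Metric.mem_ball, Complex.dist_eq, sub_zero] at hz
    obtain ⟨⟨_, hintz⟩, _⟩ := hmem z hzδ
    have hsy : DifferentiableAt ℂ (⇑F.symm) (z, (0:ℂ)) :=
      hudiff.differentiableAt (mem_interior_iff_mem_nhds.1 hintz)
    have hι : DifferentiableAt ℂ (fun w : ℂ => (w, (0:ℂ))) z :=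
      differentiableAt_id.prodMk (differentiableAt_const _)
    have hφd : DifferentiableAt ℂ φ z := by
      show DifferentiableAt ℂ ((⇑F.symm) ∘ fun w : ℂ => (w, (0:ℂ))) z
      exact DifferentiableAt.comp (f := fun w : ℂ => (w, (0:ℂ))) z hsy hι
    have hYd : DifferentiableAt ℂ Y z := by
      show DifferentiableAt ℂ (Prod.snd ∘ φ) z
      exact DifferentiableAt.comp (g := Prod.snd) (f := φ) z
        (differentiable_snd.differentiableAt) hφd
    exact hYd.differentiableWithinAt
  · -- the functional equation
    intro z hz
    obtain ⟨_, hYτ⟩ := hmem z hz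
    obtain ⟨hφz, heq⟩ := hkey z hz
    refine ⟨hsummable_abs (Y z) hYτ.le, g (Y z), hhassum (Y z) hYτ.le, ?_⟩
    rw [hc₀def] at heq
    linear_combination heq
  · -- uniqueness
    intro δ' hδ' Y' hY'diff hY'0 hY'eq
    have hY'cont : ContinuousAt Y' 0 :=
      hY'diff.continuousOn.continuousAt (Metric.ball_mem_nhds _ hδ')
    have hc2 : ContinuousAt (fun z : ℂ => (z, Y' z)) 0 :=
      continuous_id.continuousAt.prodMk hY'cont
    have hpre : (fun z : ℂ => (z, Y' z)) ⁻¹' F.source ∈ 𝓝 (0:ℂ) := by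
      refine hc2.preimage_mem_nhds (F.open_source.mem_nhds ?_)
      show ((0:ℂ), Y' 0) ∈ F.source
      rw [hY'0]; exact hsrc
    have hmem2 : (fun z : ℂ => (z, Y' z)) ⁻¹' F.source ∩ Metric.ball 0 δ'
        ∩ Metric.ball 0 δ ∈ 𝓝 (0:ℂ) :=
      Filter.inter_mem (Filter.inter_mem hpre (Metric.ball_mem_nhds _ hδ'))
        (Metric.ball_mem_nhds _ hδpos)
    obtain ⟨δ'', hδ''pos, hsub2⟩ := Metric.mem_nhds_iff.1 hmem2
    refine ⟨δ'', hδ''pos, ?_⟩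
    intro z hz
    have hzmem := hsub2 (by rwa [Metric.mem_ball, Complex.dist_eq, sub_zero])
    obtain ⟨⟨hsrc', hz'⟩, hzδ0⟩ := hzmem
    have hzδ' : ‖z‖ < δ' := by
      rwa [Metric.mem_ball, Complex.dist_eq, sub_zero] at hz'
    have hzδc : ‖z‖ < δ := by
      rwa [Metric.mem_ball, Complex.dist_eq, sub_zero] at hzδ0
    obtain ⟨S', hS', heq'⟩ := hY'eq z hzδ'
    have hS'val : S' = g (Y' z) := by
      rw [hgdef]
      exact hS'.tsum_eq.symm
    rw [hS'val] at heq'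
    have hΨ' : Ψ (z, Y' z) = (z, (0:ℂ)) := by
      have h2 : Y' z - (A₁:ℂ)*z - c₀*(z*Y' z) - (M:ℂ)*g (Y' z) = 0 := by
        rw [hc₀def]
        linear_combination heq'
      show ((z, Y' z).1, (z, Y' z).2 - (A₁:ℂ)*(z, Y' z).1
        - c₀*((z, Y' z).1*(z, Y' z).2) - (M:ℂ)*g (z, Y' z).2) = (z, (0:ℂ))
      exact Prod.ext rfl h2
    obtain ⟨⟨htgtz, _⟩, _⟩ := hmem z hzδc
    obtain ⟨hφz, _⟩ := hkey z hzδc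
    have hΨz : Ψ (z, Y z) = (z, (0:ℂ)) := by
      rw [← hφz]
      have h := F.right_inv htgtz
      rw [hFcoe] at h
      exact h
    have hsrcY : (z, Y z) ∈ F.source := by
      rw [← hφz]; exact F.map_target htgtz
    have hinj := F.injOn hsrc' hsrcY (by rw [hFcoe, hFcoe, hΨ', hΨz])
    exact congrArg Prod.snd hinj
end
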